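/- arXiv:1902.10140 — 5 statements merged into one kernel-verified Lean document; each statement's English description precedes it below -/
import Mathlib

section
/- Nearest Neighbor guarantees a 1/n fraction of the optimum: if d* is the distance from the origin to the nearest reward, then OPT ≤ n·γ^{d*}, and since NN collects at least γ^{d*}, we have NN/OPT ≥ 1/n. -/
/-!
Every tour starts with a step from the origin to some reward, which costs at least `d*`; since
distances are nonnegative, each of the `n` discounted terms of the tour value is at most `γ ^ d*`.
Hence `OPT ≤ n · γ ^ d*`, while `OPT > 0` because any enumeration of the rewards has positive value.
-/

open Finset

section TourValue

variable {α : Type*} (γ : ℝ) (d : α → α → ℝ) (o : ℕ → α) (n : ℕ)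

noncomputable def tourValue : ℝ :=
  ∑ j ∈ range n, γ ^ (∑ t ∈ range (j + 1), d (o t) (o (t + 1)))

variable {γ d o n}

theorem tourValue_pos (hγ : 0 < γ) (hn : n ≠ 0) : 0 < tourValue γ d o n :=
  sum_pos (fun _ _ => Real.rpow_pos_of_pos hγ _) (nonempty_range_iff.mpr hn)

theorem tourValue_le_of_le_first_step (hγ0 : 0 < γ) (hγ1 : γ ≤ 1) (hd : ∀ i j, 0 ≤ d i j)
    {r : ℝ} (hr : r ≤ d (o 0) (o 1)) : tourValue γ d o n ≤ n * γ ^ r := by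
  have hterm : ∀ j ∈ range n, γ ^ (∑ t ∈ range (j + 1), d (o t) (o (t + 1))) ≤ γ ^ r := by
    intro j _
    apply Real.rpow_le_rpow_of_exponent_ge hγ0 hγ1
    calc r ≤ d (o 0) (o 1) := hr
      _ ≤ ∑ t ∈ range (j + 1), d (o t) (o (t + 1)) :=
        single_le_sum (f := fun t => d (o t) (o (t + 1))) (fun _ _ => hd _ _) (by simp)
  calc tourValue γ d o n ≤ ∑ _j ∈ range n, γ ^ r := sum_le_sum hterm
    _ = n * γ ^ r := by rw [sum_const, card_range, nsmul_eq_mul]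

end TourValue

theorem Fin.ofNat_injOn_Icc (n : ℕ) : Set.InjOn (Fin.ofNat (n + 1)) (Set.Icc 0 n) := by
  intro a ha b hb hab
  simpa [Fin.ext_iff, Nat.mod_eq_of_lt (Nat.lt_succ_of_le ha.2),
    Nat.mod_eq_of_lt (Nat.lt_succ_of_le hb.2)] using hab

theorem nn_guarantee_general (n : ℕ) (γ : ℝ) (hγ : γ ∈ Set.Ioo (0:ℝ) 1)
    (d : Fin (n+1) → Fin (n+1) → ℝ) (hd : ∀ i j, 0 ≤ d i j)
    (dstar : ℝ)
    (hstar : IsLeast {r : ℝ | ∃ i : Fin (n+1), i ≠ 0 ∧ r = d 0 i} dstar)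
    (OPT : ℝ)
    (hOPT : OPT = sSup {v : ℝ | ∃ o : ℕ → Fin (n+1), o 0 = 0 ∧
      Set.InjOn o (Set.Icc 0 n) ∧
      v = ∑ j ∈ Finset.range n,
            γ ^ (∑ t ∈ Finset.range (j+1), d (o t) (o (t+1)))}) :
    γ ^ dstar / OPT ≥ 1 / n := by
  obtain ⟨hγ0, hγ1⟩ := hγ
  have hn : n ≠ 0 := by
    rintro rfl
    obtain ⟨⟨i, hi, -⟩, -⟩ := hstar
    exact hi (Fin.ext (Nat.lt_one_iff.mp i.2))
  set tours := {v : ℝ | ∃ o : ℕ → Fin (n+1), o 0 = 0 ∧ Set.InjOn o (Set.Icc 0 n) ∧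
    v = tourValue γ d o n}
  have hub : ∀ v ∈ tours, v ≤ n * γ ^ dstar := by
    rintro v ⟨o, ho0, hinj, rfl⟩
    have ho1 : o 1 ≠ 0 := fun h => one_ne_zero <|
      hinj (by simp [Nat.one_le_iff_ne_zero, hn]) (by simp) (h.trans ho0.symm)
    exact tourValue_le_of_le_first_step hγ0 hγ1.le hd (ho0 ▸ hstar.2 ⟨o 1, ho1, rfl⟩)
  have hmem : tourValue γ d (Fin.ofNat (n + 1)) n ∈ tours :=
    ⟨_, Fin.ofNat_zero _, Fin.ofNat_injOn_Icc n, rfl⟩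
  have hOPT_le : OPT ≤ n * γ ^ dstar := hOPT ▸ csSup_le ⟨_, hmem⟩ hub
  have hOPT_pos : 0 < OPT := hOPT ▸ (tourValue_pos hγ0 hn).trans_le (le_csSup ⟨_, hub⟩ hmem)
  rw [ge_iff_le, div_le_div_iff₀ (by positivity) hOPT_pos]
  linarith

/-- Nearest Neighbor guarantees a `1/n` fraction of the optimum:
`NN` collects at least `γ ^ d*` where `d*` is the distance from the origin to the
nearest reward, and `OPT ≤ n · γ ^ d*`, hence `γ ^ d* / OPT ≥ 1/n`. -/
theorem nn_guarantee (n : ℕ) (hn : 1 ≤ n) (γ : ℝ) (hγ : γ ∈ Set.Ioo (0:ℝ) 1)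
    (d : Fin (n+1) → Fin (n+1) → ℝ) (hd : ∀ i j, 0 ≤ d i j)
    (dstar : ℝ)
    (hstar : IsLeast {r : ℝ | ∃ i : Fin (n+1), i ≠ 0 ∧ r = d 0 i} dstar)
    (OPT : ℝ)
    (hOPT : OPT = sSup {v : ℝ | ∃ o : ℕ → Fin (n+1), o 0 = 0 ∧
      Set.InjOn o (Set.Icc 0 n) ∧
      v = ∑ j ∈ Finset.range n,
            γ ^ (∑ t ∈ Finset.range (j+1), d (o t) (o (t+1)))}) :
    γ ^ dstar / OPT ≥ 1 / n :=
  nn_guarantee_general n γ hγ d hd dstar hstar OPT hOPT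
end

section
/- On the star graph where all n edges have length d with γ^d = 1/2, a policy that collects the n/2 clique-connected rewards last achieves value at most 24/n times the optimum, when γ = 1 - 1/n. -/
/-!
Since `γ ^ d = 1/2`, the numerator is `2 ∑ 2^{-(2i-1)} + 2^{-n} γ S ≤ 2 + 1`, a constant, while the
denominator is at least `S = ∑_{i < n/2} γ ^ i ≥ n/4`, because Bernoulli gives
`γ ^ i ≥ 1 - i/n ≥ 1/2` for `i ≤ n/2`.
-/

open Finset Real

lemma sum_Icc_rpow_odd_mul_le_one {γ d : ℝ} (hγ : 0 ≤ γ) (hd : γ ^ d = 1/2) (m : ℕ) :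
    ∑ i ∈ Icc 1 m, γ ^ ((2 * (i : ℝ) - 1) * d) ≤ 1 := by
  have hterm : ∀ i ∈ Icc 1 m, γ ^ ((2 * (i : ℝ) - 1) * d) ≤ (1/2) ^ i := by
    intro i hi
    have hi1 : (1 : ℝ) ≤ i := by exact_mod_cast (mem_Icc.mp hi).1
    rw [mul_comm, rpow_mul hγ, hd, ← rpow_natCast]
    exact rpow_le_rpow_of_exponent_ge (by norm_num) (by norm_num) (by linarith)
  calc ∑ i ∈ Icc 1 m, γ ^ ((2 * (i : ℝ) - 1) * d)
      ≤ ∑ i ∈ Ico 1 (m + 1), (1/2 : ℝ) ^ i := by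
        rw [Ico_add_one_right_eq_Icc]; exact sum_le_sum hterm
    _ ≤ (1/2) ^ 1 / (1 - 1/2) := geom_sum_Ico_le_of_lt_one (by norm_num) (by norm_num)
    _ = 1 := by norm_num

lemma sum_range_pow_le_card {γ : ℝ} (h0 : 0 ≤ γ) (h1 : γ ≤ 1) (m : ℕ) :
    ∑ i ∈ range m, γ ^ i ≤ m := by
  simpa using sum_le_card_nsmul (range m) (γ ^ ·) 1 fun i _ ↦ pow_le_one₀ h0 h1

lemma half_le_one_sub_inv_pow {n i : ℕ} (h : 2 * i ≤ n) :
    1/2 ≤ (1 - 1/(n : ℝ)) ^ i := by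
  rcases Nat.eq_zero_or_pos n with rfl | hn
  · norm_num
  have hin : (i : ℝ) / n ≤ 1/2 := by
    rw [div_le_iff₀ (by exact_mod_cast hn)]
    have : (2 * i : ℝ) ≤ n := by exact_mod_cast h
    linarith
  have hbern := one_add_mul_le_pow (a := -(1/(n : ℝ))) (by
    have : 1/(n : ℝ) ≤ 1 := by simpa using Nat.cast_inv_le_one (α := ℝ) n
    linarith) i
  calc (1/2 : ℝ) ≤ 1 + i * -(1/(n : ℝ)) := by rw [mul_neg, mul_one_div]; linarith
    _ ≤ (1 - 1/(n : ℝ)) ^ i := by rwa [← sub_eq_add_neg] at hbern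

lemma half_mul_card_le_sum_range_one_sub_inv_pow {n m : ℕ} (h : 2 * m ≤ n) :
    (m : ℝ) / 2 ≤ ∑ i ∈ range m, (1 - 1/(n : ℝ)) ^ i := by
  have := card_nsmul_le_sum (range m) ((1 - 1/(n : ℝ)) ^ ·) (1/2) fun i hi ↦
    half_le_one_sub_inv_pow (by have := mem_range.mp hi; omega)
  simpa [div_eq_mul_inv] using this

lemma half_pow_mul_le_one (n : ℕ) : (1/2 : ℝ) ^ n * n ≤ 1 := by
  rw [one_div_pow, one_div_mul_eq_div, div_le_one (by positivity)]
  exact_mod_cast Nat.lt_two_pow_self.le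

/-- On the star graph where all edges have length `d` with `γ^d = 1/2` and
`γ = 1 - 1/n`, a deterministic local policy that collects the `n/2`
clique-connected rewards last achieves at most `24/n` of the optimum. -/
theorem det_local_star_bound (n : ℕ) (hn : 2 ≤ n) (hev : Even n)
    (γ d : ℝ) (hγ : γ = 1 - 1/(n:ℝ)) (hd : γ ^ d = 1/2) :
    (γ ^ (-d) * ∑ i ∈ Finset.Icc 1 (n/2), γ ^ ((2*(i:ℝ)-1)*d)
        + γ ^ ((n:ℝ)*d + 1) * ∑ i ∈ Finset.range (n/2), γ ^ i)
      / (∑ i ∈ Finset.range (n/2), γ ^ i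
        + γ ^ (2*d + (n:ℝ)/2 - 1) * ∑ i ∈ Finset.Icc 1 (n/2), γ ^ ((2*(i:ℝ)-1)*d))
      ≤ 24 / n := by
  have hn2 : (2 : ℝ) ≤ n := by exact_mod_cast hn
  have hγ0 : 0 < γ := by
    rw [hγ, sub_pos, div_lt_one (by linarith)]; linarith
  have hγ1 : γ ≤ 1 := by
    rw [hγ, sub_le_self_iff]; positivity
  have hm : 2 * (n / 2 : ℕ) = n := Nat.two_mul_div_two_of_even hev
  have hm' : ((n / 2 : ℕ) : ℝ) = n / 2 := by
    rw [eq_div_iff two_ne_zero, mul_comm]; exact_mod_cast hm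
  set S := ∑ i ∈ range (n / 2), γ ^ i
  set T := ∑ i ∈ Icc 1 (n / 2), γ ^ ((2 * (i : ℝ) - 1) * d)
  have hS_le : S ≤ n / 2 := hm' ▸ sum_range_pow_le_card hγ0.le hγ1 _
  have hS_ge : n / 4 ≤ S := by
    have := hγ ▸ half_mul_card_le_sum_range_one_sub_inv_pow hm.le
    rw [hm'] at this; linarith
  have hT_le : T ≤ 1 := sum_Icc_rpow_odd_mul_le_one hγ0.le hd _
  have hT_nonneg : 0 ≤ T := sum_nonneg fun i _ ↦ by positivity
  have hγ_neg : γ ^ (-d) = 2 := by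
    rw [rpow_neg hγ0.le, hd]; norm_num
  have hγ_nd : γ ^ ((n : ℝ) * d + 1) = (1/2) ^ n * γ := by
    rw [rpow_add hγ0, rpow_one, mul_comm (n : ℝ) d, rpow_mul hγ0.le, hd, rpow_natCast]
  have htail : (1/2 : ℝ) ^ n * γ * S ≤ 1 :=
    calc (1/2 : ℝ) ^ n * γ * S ≤ (1/2) ^ n * 1 * n :=
          mul_le_mul (by gcongr) (by linarith) (by linarith) (by positivity)
      _ ≤ 1 := by rw [mul_one]; exact half_pow_mul_le_one n
  have hnum : γ ^ (-d) * T + γ ^ ((n : ℝ) * d + 1) * S ≤ 6 := by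
    rw [hγ_neg, hγ_nd]; linarith
  have hden : n / 4 ≤ S + γ ^ (2 * d + (n : ℝ) / 2 - 1) * T := by
    have : 0 ≤ γ ^ (2 * d + (n : ℝ) / 2 - 1) * T := by positivity
    linarith
  calc _ ≤ 6 / ((n : ℝ) / 4) := div_le_div₀ (by norm_num) hnum (by positivity) hden
    _ = 24 / n := by field_simp; norm_num
end

section
/- On the star graph with edge length d where γ^d = 1/2 and γ = 1 - 1/√n, the optimal tour value OPT = γ^d·Σ_{i=0}^{√n-1} γ^i + γ^{2d + √n - 1}·Σ_{i=1}^{n - √n} γ^{(2i-1)d} is at least √n/4. -/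
/-!
Since `γ ^ d = 1/2`, the clique part of the tour is exactly half the geometric sum
`∑_{i<m} γ^i`, and the leaf part is nonnegative. For `γ = 1 - 1/m` the geometric sum equals
`m (1 - γ^m)`, and `(1 - 1/m)^m ≤ e⁻¹ < 1/2`, so it is at least `m/2`.
-/

open Finset

lemma one_sub_one_div_natCast_nonneg (m : ℕ) : 0 ≤ 1 - 1 / (m : ℝ) := by
  rcases m.eq_zero_or_pos with rfl | hm
  · simp
  · rw [sub_nonneg, div_le_one (by positivity)]
    exact_mod_cast hm

lemma one_sub_one_div_pow_self_le_half (m : ℕ) (hm : 0 < m) : (1 - 1 / (m : ℝ)) ^ m ≤ 1 / 2 :=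
  (Real.one_sub_div_pow_le_exp_neg (by exact_mod_cast hm)).trans Real.exp_neg_one_lt_half.le

lemma geom_sum_one_sub_one_div (m : ℕ) (hm : 0 < m) :
    ∑ i ∈ range m, (1 - 1 / (m : ℝ)) ^ i = m * (1 - (1 - 1 / (m : ℝ)) ^ m) := by
  have hm' : (m : ℝ) ≠ 0 := by positivity
  rw [geom_sum_eq (by simpa using hm')]
  field_simp
  ring

lemma natCast_div_two_le_geom_sum_one_sub_one_div (m : ℕ) :
    (m : ℝ) / 2 ≤ ∑ i ∈ range m, (1 - 1 / (m : ℝ)) ^ i := by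
  rcases m.eq_zero_or_pos with rfl | hm
  · simp
  · rw [geom_sum_one_sub_one_div m hm]
    nlinarith [one_sub_one_div_pow_self_le_half m hm, (Nat.cast_pos (α := ℝ)).2 hm]

theorem opt_star_lower_bound_general (m : ℕ) (n : ℕ)
    (γ d : ℝ) (hγ : γ = 1 - 1/(m:ℝ)) (hd : γ ^ d = 1/2) :
    γ ^ d * ∑ i ∈ Finset.range m, γ ^ i
        + γ ^ (2*d + (m:ℝ) - 1) * ∑ i ∈ Finset.Icc 1 (n - m), γ ^ ((2*(i:ℝ)-1)*d)
      ≥ (1/2) * ∑ i ∈ Finset.range m, γ ^ i ∧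
    (1/2) * ∑ i ∈ Finset.range m, γ ^ i ≥ (m : ℝ)/4 := by
  have hγ_nonneg : 0 ≤ γ := hγ ▸ one_sub_one_div_natCast_nonneg m
  constructor
  · rw [hd, ge_iff_le, le_add_iff_nonneg_right]
    exact mul_nonneg (Real.rpow_nonneg hγ_nonneg _)
      (sum_nonneg fun i _ ↦ Real.rpow_nonneg hγ_nonneg _)
  · subst hγ
    linarith [natCast_div_two_le_geom_sum_one_sub_one_div m]

/-- On the star graph with edge length `d`, `γ^d = 1/2` and `γ = 1 - 1/√n`
(`n = m²`, `m ≥ 2`), the optimal tour value is at least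
`(1/2)·∑_{i=0}^{m-1} γ^i ≥ m/4 = √n/4`. -/
theorem opt_star_lower_bound (m : ℕ) (hm : 2 ≤ m) (n : ℕ) (hn : n = m^2)
    (γ d : ℝ) (hγ : γ = 1 - 1/(m:ℝ)) (hdpos : 0 < d) (hd : γ ^ d = 1/2) :
    γ ^ d * ∑ i ∈ Finset.range m, γ ^ i
        + γ ^ (2*d + (m:ℝ) - 1) * ∑ i ∈ Finset.Icc 1 (n - m), γ ^ ((2*(i:ℝ)-1)*d)
      ≥ (1/2) * ∑ i ∈ Finset.range m, γ ^ i ∧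
    (1/2) * ∑ i ∈ Finset.range m, γ ^ i ≥ (m : ℝ)/4 :=
  opt_star_lower_bound_general m n γ d hγ hd
end

section
/- Segment-counting lemma for R-NN: if x ≤ Σ_{i=1}^{k} 2^{r_i + 1}·i·θ with θ = x/√n, each r_i ≥ 1, and k ≤ log₂ n, then r_max ≥ (1/2)log₂ n − 2 log₂ log₂ n − 2, hence Σ_{i=1}^k r_i = Ω(log n). -/
/-!
Bounding every `r i` by `R = max r` and every `i` by `k` gives `x ≤ 2^(R+1)·k²·θ`; since
`θ = x/√n` and `x > 0`, this says `√n ≤ 2^(R+1)·k²`. Taking `log₂` and using `k ≤ log₂ n`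
yields `(1/2)·log₂ n ≤ R + 1 + 2·log₂ log₂ n`.
-/

open Finset Real

lemma sum_Icc_two_pow_mul_le {θ : ℝ} (hθ : 0 ≤ θ) (k : ℕ) (r : ℕ → ℕ) :
    ∑ i ∈ Icc 1 k, (2:ℝ) ^ (r i + 1) * (i:ℝ) * θ ≤ 2 ^ ((Icc 1 k).sup r + 1) * (k:ℝ) ^ 2 * θ := by
  have hterm : ∀ i ∈ Icc 1 k,
      (2:ℝ) ^ (r i + 1) * (i:ℝ) * θ ≤ 2 ^ ((Icc 1 k).sup r + 1) * (k:ℝ) * θ := by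
    intro i hi
    have hik : (i:ℝ) ≤ k := by exact_mod_cast (mem_Icc.mp hi).2
    have hpow : (2:ℝ) ^ (r i + 1) ≤ 2 ^ ((Icc 1 k).sup r + 1) :=
      pow_le_pow_right₀ one_le_two (Nat.succ_le_succ (le_sup hi))
    gcongr
  calc ∑ i ∈ Icc 1 k, (2:ℝ) ^ (r i + 1) * (i:ℝ) * θ
      ≤ (Icc 1 k).card • (2 ^ ((Icc 1 k).sup r + 1) * (k:ℝ) * θ) := sum_le_card_nsmul _ _ _ hterm
    _ = 2 ^ ((Icc 1 k).sup r + 1) * (k:ℝ) ^ 2 * θ := by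
      rw [Nat.card_Icc, Nat.add_sub_cancel, nsmul_eq_mul]; ring

lemma le_of_le_mul_div {x s C : ℝ} (hx : 0 < x) (hs : 0 < s) (h : x ≤ C * (x / s)) : s ≤ C := by
  rw [mul_div_assoc', le_div_iff₀ hs, mul_comm] at h
  exact le_of_mul_le_mul_right h hx

lemma half_logb_le_of_sqrt_le {y k : ℝ} {m : ℕ} (hy : 0 < y) (hk : 0 < k)
    (h : √y ≤ 2 ^ m * k ^ 2) : (1/2) * logb 2 y ≤ m + 2 * logb 2 k := by
  calc (1/2) * logb 2 y = logb 2 √y := by rw [logb, logb, log_sqrt hy.le]; ring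
    _ ≤ logb 2 (2 ^ m * k ^ 2) := logb_le_logb_of_le one_lt_two (sqrt_pos.mpr hy) h
    _ = m + 2 * logb 2 k := by
      rw [logb_mul (by positivity) (by positivity), logb_pow, logb_pow,
        logb_self_eq_one one_lt_two]
      push_cast
      ring

theorem segment_counting_general (n : ℕ) (hn : 2 ≤ n) (x θ : ℝ) (hx : 0 < x)
    (hθ : θ = x / Real.sqrt n)
    (k : ℕ) (hk2 : (k : ℝ) ≤ Real.logb 2 n)
    (r : ℕ → ℕ)
    (hsum : x ≤ ∑ i ∈ Finset.Icc 1 k, (2:ℝ)^(r i + 1) * (i:ℝ) * θ) :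
    (((Finset.Icc 1 k).sup r : ℕ) : ℝ)
      ≥ (1/2) * Real.logb 2 n - 2 * Real.logb 2 (Real.logb 2 n) - 2 := by
  set R := (Icc 1 k).sup r
  have hn_pos : (0:ℝ) < n := by exact_mod_cast (by omega : 0 < n)
  have hθ_nonneg : 0 ≤ θ := hθ ▸ div_nonneg hx.le (sqrt_nonneg _)
  have hsqrt : √(n:ℝ) ≤ 2 ^ (R + 1) * (k:ℝ) ^ 2 := by
    refine le_of_le_mul_div hx (sqrt_pos.mpr hn_pos) ?_
    rw [← hθ]
    exact hsum.trans (sum_Icc_two_pow_mul_le hθ_nonneg k r)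
  have hk_pos : (0:ℝ) < k := Nat.cast_pos.mpr <| Nat.pos_of_ne_zero fun hk0 =>
    (sqrt_pos.mpr hn_pos).not_ge (hsqrt.trans_eq (by simp [hk0]))
  have hlog := half_logb_le_of_sqrt_le hn_pos hk_pos hsqrt
  have hlogk : logb 2 k ≤ logb 2 (logb 2 n) := logb_le_logb_of_le one_lt_two hk_pos hk2
  push_cast at hlog
  linarith

/-- Segment-counting lemma for R-NN: if `x ≤ ∑_{i=1}^{k} 2^{r_i+1}·i·θ` with
`θ = x/√n`, each `r_i ≥ 1` and `k ≤ log₂ n`, then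
`r_max ≥ (1/2)·log₂ n − 2·log₂ log₂ n − 2`. -/
theorem segment_counting (n : ℕ) (hn : 2 ≤ n) (x θ : ℝ) (hx : 0 < x)
    (hθ : θ = x / Real.sqrt n)
    (k : ℕ) (hk1 : 1 ≤ k) (hk2 : (k : ℝ) ≤ Real.logb 2 n)
    (r : ℕ → ℕ) (hr : ∀ i ∈ Finset.Icc 1 k, 1 ≤ r i)
    (hsum : x ≤ ∑ i ∈ Finset.Icc 1 k, (2:ℝ)^(r i + 1) * (i:ℝ) * θ) :
    (((Finset.Icc 1 k).sup r : ℕ) : ℝ)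
      ≥ (1/2) * Real.logb 2 n - 2 * Real.logb 2 (Real.logb 2 n) - 2 :=
  segment_counting_general n hn x θ hx hθ k hk2 r hsum
end

section
/- Discounted value upper bound after log-many segments: if γ^x = 1/2, then the discounted value of any rewards collected after traveling distance log₂(n)·x is at most (number of remaining rewards)·γ^{log₂(n)·x} ≤ n·(1/n) = 1, hence some segment of length x contains at least OPT/log₂(n) of the optimal value (minus 1). -/
/-! Since `γ ^ x = 1/2`, the reward of segment `j` is discounted by `2⁻ʲ`, so every segment from
the `L`-th on discounts by at least `2⁻ᴸ = 1/n`; as at most `n` rewards are collected in total,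
those segments carry value at most `1`. The remaining `OPT - 1 ≥ OPT / 2` of the value lies in the
first `L` segments, and by averaging one of them carries at least `(OPT - 1) / L`. -/

open Finset

lemma rpow_natCast_mul_of_rpow_eq {γ x c : ℝ} (hγ : 0 ≤ γ) (hx : γ ^ x = c) (j : ℕ) :
    γ ^ ((j : ℝ) * x) = c ^ j := by
  rw [mul_comm, Real.rpow_mul hγ, hx, Real.rpow_natCast]

lemma sum_Ico_le_pow_mul_sum_Ico {c : ℝ} (hc0 : 0 ≤ c) (hc1 : c ≤ 1) {v m : ℕ → ℝ}
    (hm : ∀ j, 0 ≤ m j) (hvm : ∀ j, v j ≤ m j * c ^ j) (L M : ℕ) :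
    ∑ j ∈ Ico L M, v j ≤ c ^ L * ∑ j ∈ Ico L M, m j := by
  rw [mul_sum]
  refine sum_le_sum fun j hj ↦ (hvm j).trans ?_
  rw [mul_comm]
  exact mul_le_mul_of_nonneg_right (pow_le_pow_of_le_one hc0 hc1 (mem_Ico.mp hj).1) (hm j)

lemma exists_lt_div_le_of_le_sum_range {v : ℕ → ℝ} {a : ℝ} {L : ℕ} (ha : 0 < a)
    (hsum : a ≤ ∑ j ∈ range L, v j) : ∃ j < L, a / L ≤ v j := by
  have hL : L ≠ 0 := by
    rintro rfl
    simp only [range_zero, sum_empty] at hsum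
    linarith
  obtain ⟨j, hj, hle⟩ := exists_le_of_sum_le (nonempty_range_iff.mpr hL)
    (f := fun _ ↦ a / L) (g := v) (by
      rwa [sum_const, card_range, nsmul_eq_mul, mul_div_cancel₀ _ (Nat.cast_ne_zero.mpr hL)])
  exact ⟨j, mem_range.mp hj, hle⟩

theorem segment_value_bound_general (γ : ℝ) (hγ : γ ∈ Set.Ioo (0:ℝ) 1)
    (x : ℝ) (hx : γ ^ x = 1/2) (n : ℕ)
    (M : ℕ) (v : ℕ → ℝ) (m : ℕ → ℕ)
    (hvm : ∀ j, v j ≤ (m j : ℝ) * γ ^ ((j:ℝ) * x))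
    (hm : ∑ j ∈ Finset.range M, m j ≤ n)
    (L : ℕ) (hL : n = 2^L) (hLM : L ≤ M)
    (OPT : ℝ) (hOPT : OPT = ∑ j ∈ Finset.range M, v j) (hOPT2 : 2 ≤ OPT) :
    (∑ j ∈ Finset.Ico L M, v j ≤ 1) ∧
      ∃ j < L, v j ≥ (OPT - 1) / L ∧ (OPT - 1) / L ≥ OPT / (2*L) := by
  have hm_tail : ∑ j ∈ Ico L M, (m j : ℝ) ≤ 2 ^ L := by
    have hsub : Ico L M ⊆ range M := range_eq_Ico M ▸ Ico_subset_Ico_left (Nat.zero_le L)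
    exact_mod_cast hL ▸ (sum_le_sum_of_subset (f := m) hsub).trans hm
  have htail : ∑ j ∈ Ico L M, v j ≤ 1 := calc
    ∑ j ∈ Ico L M, v j ≤ (1 / 2) ^ L * ∑ j ∈ Ico L M, (m j : ℝ) :=
      sum_Ico_le_pow_mul_sum_Ico (by norm_num) (by norm_num) (fun j ↦ Nat.cast_nonneg _)
        (fun j ↦ rpow_natCast_mul_of_rpow_eq hγ.1.le hx j ▸ hvm j) L M
    _ ≤ (1 / 2) ^ L * 2 ^ L := by gcongr
    _ = 1 := by rw [← mul_pow]; norm_num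
  have hhead : OPT - 1 ≤ ∑ j ∈ range L, v j := by
    linarith [sum_range_add_sum_Ico v hLM]
  obtain ⟨j, hjL, hj⟩ := exists_lt_div_le_of_le_sum_range (by linarith) hhead
  have hLpos : (0 : ℝ) < L := Nat.cast_pos.mpr (Nat.zero_lt_of_lt hjL)
  refine ⟨htail, j, hjL, hj, ?_⟩
  rw [ge_iff_le, div_le_div_iff₀ (by positivity) hLpos]
  nlinarith

/-- Discounted value after log-many segments: if `γ^x = 1/2`, the value
collected after the first `L = log₂ n` segments is at most `1`; hence if
`OPT ≥ 2` some single segment contributes at least `(OPT−1)/L ≥ OPT/(2L)`. -/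
theorem segment_value_bound (γ : ℝ) (hγ : γ ∈ Set.Ioo (0:ℝ) 1)
    (x : ℝ) (hx : γ ^ x = 1/2) (n : ℕ) (hn : 2 ≤ n)
    (M : ℕ) (v : ℕ → ℝ) (m : ℕ → ℕ)
    (hv0 : ∀ j, 0 ≤ v j)
    (hvm : ∀ j, v j ≤ (m j : ℝ) * γ ^ ((j:ℝ) * x))
    (hm : ∑ j ∈ Finset.range M, m j ≤ n)
    (L : ℕ) (hL : n = 2^L) (hLM : L ≤ M)
    (OPT : ℝ) (hOPT : OPT = ∑ j ∈ Finset.range M, v j) (hOPT2 : 2 ≤ OPT) :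
    (∑ j ∈ Finset.Ico L M, v j ≤ 1) ∧
      ∃ j < L, v j ≥ (OPT - 1) / L ∧ (OPT - 1) / L ≥ OPT / (2*L) :=
  segment_value_bound_general γ hγ x hx n M v m hvm hm L hL hLM OPT hOPT hOPT2
end
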